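/- Let (M^n, g) be a compact and connected Riemannian manifold of dimension n ≥ 2 admitting a 1-form α with ∇α = ψ g for some smooth function ψ ≢ 0 (a closed conformal Killing non-isometric 1-form). Then for all vector fields X, Y one has d^∇ Ric^g (X, Y, α) = 0, where α is identified with its dual vector field. -/

import Mathlib

noncomputable section

open scoped Manifold
open Metric Module Finset

/-- The Euclidean model space `ℝⁿ`. -/
abbrev Euc (n : ℕ) : Type := EuclideanSpace ℝ (Fin n)

/-- Directional derivative of a real valued function on a manifold along a
(trivialized) vector field, via `mfderiv`. -/
def dDeriv {n : ℕ} {M : Type} [TopologicalSpace M] [ChartedSpace (Euc n) M]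
    (f : M → ℝ) (X : M → Euc n) (x : M) : ℝ :=
  mfderiv (𝓡 n) 𝓘(ℝ) f x (X x)

/-- Smoothness of a (trivialized) vector field. -/
def SmoothVF {n : ℕ} {M : Type} [TopologicalSpace M] [ChartedSpace (Euc n) M]
    (X : M → Euc n) : Prop :=
  ContMDiff (𝓡 n) 𝓘(ℝ, Euc n) (⊤ : ℕ∞) X

/-- Smoothness of a real valued function. -/
def SmoothFn {n : ℕ} {M : Type} [TopologicalSpace M] [ChartedSpace (Euc n) M]
    (f : M → ℝ) : Prop :=
  ContMDiff (𝓡 n) 𝓘(ℝ) (⊤ : ℕ∞) f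

/-- A Riemannian structure on a manifold `M` modelled on `ℝⁿ`, presented through a
(trivialized) tangent bundle `M × ℝⁿ`: a smooth metric `g`, its Levi-Civita
connection `conn` (characterized by being torsion free and metric), the Ricci
curvature `ric`, the scalar curvature `scal` and the positive Laplacian `lapl`
(the latter three characterized via `g`-orthonormal bases). -/
structure RiemannStructure (n : ℕ) (M : Type) [TopologicalSpace M]
    [ChartedSpace (Euc n) M] : Type where
  /-- the Riemannian metric -/
  g : M → Euc n → Euc n → ℝ
  g_symm : ∀ x u v, g x u v = g x v u
  g_add_left : ∀ x u v w, g x (u + v) w = g x u w + g x v w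
  g_smul_left : ∀ x (a : ℝ) u v, g x (a • u) v = a * g x u v
  g_posdef : ∀ x u, u ≠ 0 → 0 < g x u u
  g_smooth : ∀ X Y : M → Euc n, SmoothVF (n := n) X → SmoothVF (n := n) Y →
    SmoothFn (n := n) (fun x => g x (X x) (Y x))
  /-- the Levi-Civita covariant derivative on vector fields -/
  conn : (M → Euc n) → (M → Euc n) → M → Euc n
  conn_smooth : ∀ X Y, SmoothVF (n := n) X → SmoothVF (n := n) Y → SmoothVF (n := n) (conn X Y)
  conn_tensor_fst : ∀ X X' Y x, X x = X' x → conn X Y x = conn X' Y x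
  conn_add_fst : ∀ X X' Y x, conn (X + X') Y x = conn X Y x + conn X' Y x
  conn_add_snd : ∀ X Y Y', SmoothVF (n := n) Y → SmoothVF (n := n) Y' → ∀ x,
    conn X (Y + Y') x = conn X Y x + conn X Y' x
  conn_smul_fst : ∀ (f : M → ℝ) X Y x, conn (fun p => f p • X p) Y x = f x • conn X Y x
  conn_leibniz : ∀ (f : M → ℝ) X Y, SmoothFn (n := n) f → SmoothVF (n := n) Y → ∀ x,
    conn X (fun p => f p • Y p) x = dDeriv (n := n) f X x • Y x + f x • conn X Y x
  /-- `∇` is torsion free : `∇_X Y - ∇_Y X = [X,Y]` acts on functions as the commutator -/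
  conn_torsion_free : ∀ (f : M → ℝ) X Y, SmoothFn (n := n) f → SmoothVF (n := n) X → SmoothVF (n := n) Y → ∀ x,
    dDeriv (n := n) f (fun p => conn X Y p - conn Y X p) x
      = dDeriv (n := n) (dDeriv (n := n) f Y) X x - dDeriv (n := n) (dDeriv (n := n) f X) Y x
  /-- `∇` is metric : `X ⬝ g(Y,Z) = g(∇_X Y, Z) + g(Y, ∇_X Z)` -/
  conn_metric : ∀ X Y Z, SmoothVF (n := n) X → SmoothVF (n := n) Y → SmoothVF (n := n) Z → ∀ x,
    dDeriv (n := n) (fun p => g p (Y p) (Z p)) X x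
      = g x (conn X Y x) (Z x) + g x (Y x) (conn X Z x)
  /-- `g`-orthonormal bases exist at every point -/
  onb_exists : ∀ x : M, ∃ b : Fin n → Euc n,
    ∀ i j, g x (b i) (b j) = if i = j then (1 : ℝ) else 0
  /-- the Ricci curvature (as a pointwise 2-tensor) -/
  ric : M → Euc n → Euc n → ℝ
  /-- `Ric(X,Y) = ∑ᵢ g(R(eᵢ,X)Y, eᵢ)` for any `g`-orthonormal basis,
  where `R(X,Y)Z = ∇_X ∇_Y Z - ∇_Y ∇_X Z - ∇_[X,Y] Z` -/
  ric_spec : ∀ (x : M) (b : Fin n → Euc n),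
    (∀ i j, g x (b i) (b j) = if i = j then (1 : ℝ) else 0) →
    ∀ X Y : M → Euc n, SmoothVF (n := n) X → SmoothVF (n := n) Y →
    ric x (X x) (Y x) = ∑ i : Fin n,
      g x (conn (fun _ => b i) (conn X Y) x - conn X (conn (fun _ => b i) Y) x
        - conn (fun p => conn (fun _ => b i) X p - conn X (fun _ => b i) p) Y x) (b i)
  /-- the scalar curvature -/
  scal : M → ℝ
  scal_spec : ∀ (x : M) (b : Fin n → Euc n),
    (∀ i j, g x (b i) (b j) = if i = j then (1 : ℝ) else 0) →
    scal x = ∑ i : Fin n, ric x (b i) (b i)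
  /-- the positive Laplacian `Δ f = - tr_g Hess f` -/
  lapl : (M → ℝ) → M → ℝ
  lapl_spec : ∀ (f : M → ℝ), SmoothFn (n := n) f → ∀ (x : M) (b : Fin n → Euc n),
    (∀ i j, g x (b i) (b j) = if i = j then (1 : ℝ) else 0) →
    lapl f x = -∑ i : Fin n,
      (dDeriv (n := n) (dDeriv (n := n) f (fun _ => b i)) (fun _ => b i) x
        - dDeriv (n := n) f (conn (fun _ => b i) (fun _ => b i)) x)

namespace RiemannStructure

variable {n : ℕ} {M : Type} [TopologicalSpace M] [ChartedSpace (Euc n) M]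
  (G : RiemannStructure n M)

/-- The Riemann curvature operator `R(X,Y)Z = ∇_X ∇_Y Z - ∇_Y ∇_X Z - ∇_[X,Y] Z`. -/
def curv (X Y Z : M → Euc n) : M → Euc n := fun x =>
  G.conn X (G.conn Y Z) x - G.conn Y (G.conn X Z) x
    - G.conn (fun p => G.conn X Y p - G.conn Y X p) Z x

/-- The Hessian of a function, `Hess f (X,Y) = X ⬝ (Y ⬝ f) - (∇_X Y) ⬝ f`. -/
def hess (f : M → ℝ) (X Y : M → Euc n) : M → ℝ := fun x =>
  dDeriv (n := n) (dDeriv (n := n) f Y) X x - dDeriv (n := n) f (G.conn X Y) x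

/-- The operator `U_g^* (f) = Hess f - f Ric + (Δ f) g`. -/
def Ustar (f : M → ℝ) (X Y : M → Euc n) : M → ℝ := fun x =>
  G.hess f X Y x - f x * G.ric x (X x) (Y x) + G.lapl f x * G.g x (X x) (Y x)

/-- Covariant derivative of a 2-tensor along `X` :
`(∇_X S)(Y,Z) = X ⬝ S(Y,Z) - S(∇_X Y, Z) - S(Y, ∇_X Z)`. -/
def cov2 (S : (M → Euc n) → (M → Euc n) → M → ℝ) (X Y Z : M → Euc n) : M → ℝ := fun x =>
  dDeriv (n := n) (fun p => S Y Z p) X x - S (G.conn X Y) Z x - S Y (G.conn X Z) x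

/-- `d^∇ S (X,Y,Z) = (∇_X S)(Y,Z) - (∇_Y S)(X,Z)`. -/
def dnabla (S : (M → Euc n) → (M → Euc n) → M → ℝ) (X Y Z : M → Euc n) : M → ℝ := fun x =>
  G.cov2 S X Y Z x - G.cov2 S Y X Z x

/-- The Ricci curvature as a 2-tensor on vector fields. -/
def ricT : (M → Euc n) → (M → Euc n) → M → ℝ := fun X Y x => G.ric x (X x) (Y x)

/-- The Lie derivative of the metric along (the vector field dual to) a one-form `A` :
`(L_A g)(X,Y) = g(∇_X A, Y) + g(∇_Y A, X)`. -/
def lieg (A X Y : M → Euc n) : M → ℝ := fun x =>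
  G.g x (G.conn X A x) (Y x) + G.g x (G.conn Y A x) (X x)

end RiemannStructure

/-!
Write `φ = (1 - n) ψ`. From `∇A = ψ Id` one gets `R(X,Y)A = (Xψ) Y - (Yψ) X`, and tracing gives
`Ric(·, A) = dφ`. Hence `(∇_X Ric)(Y, A) = Hess φ (X, Y) - ψ Ric(Y, X)`, which is symmetric in `X`
and `Y`: the Hessian is symmetric because `∇` is torsion free, and the Ricci tensor by the first
Bianchi identity. The latter reduces to the Jacobi identity for the bracket `∇_X Y - ∇_Y X`, which
is checked on derivatives of smooth functions; on a compact manifold these separate tangent vectors,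
by the Whitney embedding.
-/

theorem eq_zero_of_forall_mfderiv_eq_zero {E H M : Type*} [NormedAddCommGroup E]
    [NormedSpace ℝ E] [FiniteDimensional ℝ E] [TopologicalSpace H] {I : ModelWithCorners ℝ E H}
    [TopologicalSpace M] [ChartedSpace H M] [IsManifold I (⊤ : ℕ∞) M] [T2Space M] [CompactSpace M]
    {x : M} {v : TangentSpace I x}
    (hv : ∀ f : M → ℝ, ContMDiff I 𝓘(ℝ) (⊤ : ℕ∞) f → mfderiv I 𝓘(ℝ) f x v = 0) : v = 0 := by
  obtain ⟨N, e, he, -, hinj⟩ := exists_embedding_euclidean_of_compact (I := I) (M := M)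
  apply hinj x
  rw [map_zero]
  refine PiLp.ext fun j => ?_
  have hd : MDifferentiableAt I 𝓘(ℝ, EuclideanSpace ℝ (Fin N)) e x :=
    (he x).mdifferentiableAt (by simp)
  have hcomp := ((EuclideanSpace.proj (𝕜 := ℝ) j).hasFDerivAt.hasMFDerivAt.comp x
    hd.hasMFDerivAt).mfderiv
  have h0 := hv _ ((EuclideanSpace.proj (𝕜 := ℝ) j).contMDiff.comp he)
  rw [hcomp] at h0
  exact h0

section dDeriv

variable {n : ℕ} {M : Type} [TopologicalSpace M] [ChartedSpace (Euc n) M]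

lemma SmoothFn.mdifferentiableAt {f : M → ℝ} (hf : SmoothFn (n := n) f) (x : M) :
    MDifferentiableAt (𝓡 n) 𝓘(ℝ) f x :=
  (hf x).mdifferentiableAt (by simp)

lemma dDeriv_add {f h : M → ℝ} {x : M} (hf : MDifferentiableAt (𝓡 n) 𝓘(ℝ) f x)
    (hh : MDifferentiableAt (𝓡 n) 𝓘(ℝ) h x) (X : M → Euc n) :
    dDeriv (n := n) (fun p => f p + h p) X x = dDeriv (n := n) f X x + dDeriv (n := n) h X x := by
  change mfderiv (𝓡 n) 𝓘(ℝ) (f + h) x (X x) = _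
  rw [(hf.hasMFDerivAt.add hh.hasMFDerivAt).mfderiv]
  rfl

lemma dDeriv_sub {f h : M → ℝ} {x : M} (hf : MDifferentiableAt (𝓡 n) 𝓘(ℝ) f x)
    (hh : MDifferentiableAt (𝓡 n) 𝓘(ℝ) h x) (X : M → Euc n) :
    dDeriv (n := n) (fun p => f p - h p) X x = dDeriv (n := n) f X x - dDeriv (n := n) h X x := by
  change mfderiv (𝓡 n) 𝓘(ℝ) (f - h) x (X x) = _
  rw [(hf.hasMFDerivAt.sub hh.hasMFDerivAt).mfderiv]
  rfl

lemma dDeriv_const_mul {f : M → ℝ} {x : M} (hf : MDifferentiableAt (𝓡 n) 𝓘(ℝ) f x) (c : ℝ)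
    (X : M → Euc n) :
    dDeriv (n := n) (fun p => c * f p) X x = c * dDeriv (n := n) f X x := by
  change mfderiv (𝓡 n) 𝓘(ℝ) (c • f) x (X x) = _
  rw [(hf.hasMFDerivAt.const_smul c).mfderiv]
  rfl

lemma dDeriv_const (c : ℝ) (X : M → Euc n) (x : M) :
    dDeriv (n := n) (fun _ : M => c) X x = 0 := by
  rw [dDeriv, mfderiv_const]
  rfl

lemma dDeriv_sub_field (f : M → ℝ) (U V : M → Euc n) (x : M) :
    dDeriv (n := n) f (fun p => U p - V p) x = dDeriv (n := n) f U x - dDeriv (n := n) f V x :=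
  map_sub (mfderiv (𝓡 n) 𝓘(ℝ) f x) (U x) (V x)

end dDeriv

namespace RiemannStructure

variable {n : ℕ} {M : Type} [TopologicalSpace M] [ChartedSpace (Euc n) M]
  (G : RiemannStructure n M)

abbrev IsOrthonormalAt (x : M) (b : Fin n → Euc n) : Prop :=
  ∀ i j, G.g x (b i) (b j) = if i = j then (1 : ℝ) else 0

def gLeft (x : M) (w : Euc n) : Euc n →ₗ[ℝ] ℝ where
  toFun u := G.g x u w
  map_add' u v := G.g_add_left x u v w
  map_smul' a u := G.g_smul_left x a u w

lemma g_zero_left (x : M) (w : Euc n) : G.g x 0 w = 0 :=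
  map_zero (G.gLeft x w)

lemma g_neg_left (x : M) (v w : Euc n) : G.g x (-v) w = -G.g x v w :=
  map_neg (G.gLeft x w) v

lemma g_sub_left (x : M) (u v w : Euc n) : G.g x (u - v) w = G.g x u w - G.g x v w :=
  map_sub (G.gLeft x w) u v

lemma g_sum_left {ι : Type*} (x : M) (s : Finset ι) (v : ι → Euc n) (w : Euc n) :
    G.g x (∑ i ∈ s, v i) w = ∑ i ∈ s, G.g x (v i) w :=
  map_sum (G.gLeft x w) v s

lemma sum_g_smul_of_orthonormal {x : M} {b : Fin n → Euc n} (hb : G.IsOrthonormalAt x b)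
    (v : Euc n) : ∑ i, G.g x v (b i) • b i = v := by
  have hli : LinearIndependent ℝ b := by
    rw [Fintype.linearIndependent_iff]
    intro c hc i
    simpa [G.g_sum_left, G.g_smul_left, hb, G.g_zero_left] using
      congrArg (fun u => G.g x u (b i)) hc
  have hspan := hli.span_eq_top_of_card_eq_finrank' (by simp)
  set w := v - ∑ i, G.g x v (b i) • b i with hw
  have hwb : ∀ j, G.g x w (b j) = 0 := by
    intro j
    simp [hw, G.g_sub_left, G.g_sum_left, G.g_smul_left, hb]
  obtain ⟨c, hc⟩ := (Submodule.mem_span_range_iff_exists_fun ℝ).1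
    (hspan ▸ Submodule.mem_top : w ∈ Submodule.span ℝ (Set.range b))
  have hww : G.g x w w = 0 := by
    calc G.g x w w = G.g x (∑ i, c i • b i) w := by rw [hc]
      _ = 0 := by simp [G.g_sum_left, G.g_smul_left, G.g_symm x (b _) w, hwb]
  have hw0 : w = 0 := by
    by_contra h
    exact (G.g_posdef x w h).ne' hww
  exact (sub_eq_zero.1 hw0).symm

/-- `X ⬝ f` is a coordinate of `∇_X (f e) - f ∇_X e` for a constant unit vector `e`, by the
Leibniz rule. -/
lemma smoothFn_dDeriv (G : RiemannStructure n M) {f : M → ℝ} {X : M → Euc n}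
    (hf : SmoothFn (n := n) f) (hX : SmoothVF (n := n) X) :
    SmoothFn (n := n) (dDeriv (n := n) f X) := by
  rcases isEmpty_or_nonempty (Fin n) with hn | ⟨⟨i⟩⟩
  · have hzero : dDeriv (n := n) f X = fun _ => 0 := funext fun x => by
      rw [dDeriv, Subsingleton.elim (X x) 0]
      exact map_zero (mfderiv (𝓡 n) 𝓘(ℝ) f x)
    rw [hzero]
    exact contMDiff_const
  · let e : Euc n := EuclideanSpace.single i 1
    have he : SmoothVF (n := n) (fun _ : M => e) := contMDiff_const
    have hleibniz : dDeriv (n := n) f X = fun x =>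
        EuclideanSpace.proj i (G.conn X (fun p => f p • e) x - f x • G.conn X (fun _ => e) x) := by
      funext x
      rw [G.conn_leibniz f X (fun _ => e) hf he x]
      simp [e]
    rw [hleibniz]
    exact (EuclideanSpace.proj i).contMDiff.comp
      ((G.conn_smooth _ _ hX (hf.smul he)).sub (hf.smul (G.conn_smooth _ _ hX he)))

lemma conn_sub_snd (X : M → Euc n) {U V : M → Euc n} (hU : SmoothVF (n := n) U)
    (hV : SmoothVF (n := n) V) (x : M) :
    G.conn X (fun p => U p - V p) x = G.conn X U x - G.conn X V x := by
  have h := G.conn_add_snd X (fun p => U p - V p) V (hU.sub hV) hV x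
  rw [show (fun p => U p - V p) + V = U from funext fun p => sub_add_cancel (U p) (V p)] at h
  rw [h, add_sub_cancel_right]

lemma conn_const_smul_snd (X : M → Euc n) (c : ℝ) {Y : M → Euc n} (hY : SmoothVF (n := n) Y)
    (x : M) : G.conn X (fun p => c • Y p) x = c • G.conn X Y x := by
  simpa [dDeriv_const] using G.conn_leibniz (fun _ => c) X Y contMDiff_const hY x

def bracket (X Y : M → Euc n) : M → Euc n := fun p => G.conn X Y p - G.conn Y X p

lemma smoothVF_bracket {X Y : M → Euc n} (hX : SmoothVF (n := n) X) (hY : SmoothVF (n := n) Y) :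
    SmoothVF (n := n) (G.bracket X Y) :=
  (G.conn_smooth X Y hX hY).sub (G.conn_smooth Y X hY hX)

lemma dDeriv_bracket {f : M → ℝ} {X Y : M → Euc n} (hf : SmoothFn (n := n) f)
    (hX : SmoothVF (n := n) X) (hY : SmoothVF (n := n) Y) (x : M) :
    dDeriv (n := n) f (G.bracket X Y) x
      = dDeriv (n := n) (dDeriv (n := n) f Y) X x - dDeriv (n := n) (dDeriv (n := n) f X) Y x :=
  G.conn_torsion_free f X Y hf hX hY x

lemma hess_comm {f : M → ℝ} {X Y : M → Euc n} (hf : SmoothFn (n := n) f)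
    (hX : SmoothVF (n := n) X) (hY : SmoothVF (n := n) Y) (x : M) :
    G.hess f X Y x = G.hess f Y X x := by
  have h := G.dDeriv_bracket hf hX hY x
  have hsub : dDeriv (n := n) f (G.bracket X Y) x
      = dDeriv (n := n) f (G.conn X Y) x - dDeriv (n := n) f (G.conn Y X) x :=
    dDeriv_sub_field f _ _ x
  rw [hess, hess]
  linarith

lemma curv_apply (X Y Z : M → Euc n) (x : M) :
    G.curv X Y Z x = G.conn X (G.conn Y Z) x - G.conn Y (G.conn X Z) x
      - G.conn (G.bracket X Y) Z x := rfl

lemma curv_swap (X Y Z : M → Euc n) (x : M) : G.curv Y X Z x = -G.curv X Y Z x := by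
  have hbr : G.bracket Y X = fun p => (-1 : ℝ) • G.bracket X Y p :=
    funext fun p => by rw [neg_one_smul, bracket, bracket, neg_sub]
  rw [curv_apply, curv_apply, hbr, G.conn_smul_fst, neg_one_smul]
  abel

lemma curv_const_smul {X Y Z : M → Euc n} (hX : SmoothVF (n := n) X) (hY : SmoothVF (n := n) Y)
    (hZ : SmoothVF (n := n) Z) (c : ℝ) (x : M) :
    G.curv X Y (fun p => c • Z p) x = c • G.curv X Y Z x := by
  have hYZ : G.conn Y (fun p => c • Z p) = fun p => c • G.conn Y Z p :=
    funext (G.conn_const_smul_snd Y c hZ)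
  have hXZ : G.conn X (fun p => c • Z p) = fun p => c • G.conn X Z p :=
    funext (G.conn_const_smul_snd X c hZ)
  rw [curv_apply, curv_apply, hYZ, hXZ, G.conn_const_smul_snd X c (G.conn_smooth Y Z hY hZ),
    G.conn_const_smul_snd Y c (G.conn_smooth X Z hX hZ), G.conn_const_smul_snd _ c hZ,
    smul_sub, smul_sub]

lemma dDeriv_dDeriv_g {X Y Z W : M → Euc n} (hX : SmoothVF (n := n) X)
    (hY : SmoothVF (n := n) Y) (hZ : SmoothVF (n := n) Z) (hW : SmoothVF (n := n) W) (x : M) :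
    dDeriv (n := n) (dDeriv (n := n) (fun p => G.g p (Z p) (W p)) Y) X x
      = G.g x (G.conn X (G.conn Y Z) x) (W x) + G.g x (G.conn Y Z x) (G.conn X W x)
        + (G.g x (G.conn X Z x) (G.conn Y W x) + G.g x (Z x) (G.conn X (G.conn Y W) x)) := by
  have hYZ := G.conn_smooth Y Z hY hZ
  have hYW := G.conn_smooth Y W hY hW
  have hmetric : dDeriv (n := n) (fun p => G.g p (Z p) (W p)) Y
      = fun p => G.g p (G.conn Y Z p) (W p) + G.g p (Z p) (G.conn Y W p) :=
    funext (G.conn_metric Y Z W hY hZ hW)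
  rw [hmetric, dDeriv_add ((G.g_smooth _ _ hYZ hW).mdifferentiableAt x)
    ((G.g_smooth _ _ hZ hYW).mdifferentiableAt x),
    G.conn_metric X _ W hX hYZ hW, G.conn_metric X Z _ hX hZ hYW]

lemma g_curv_swap {X Y Z W : M → Euc n} (hX : SmoothVF (n := n) X) (hY : SmoothVF (n := n) Y)
    (hZ : SmoothVF (n := n) Z) (hW : SmoothVF (n := n) W) (x : M) :
    G.g x (G.curv X Y Z x) (W x) = -G.g x (G.curv X Y W x) (Z x) := by
  have hXY := G.dDeriv_dDeriv_g hX hY hZ hW x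
  have hYX := G.dDeriv_dDeriv_g hY hX hZ hW x
  have hbr := G.dDeriv_bracket (G.g_smooth Z W hZ hW) hX hY x
  rw [G.conn_metric _ Z W (G.smoothVF_bracket hX hY) hZ hW] at hbr
  rw [curv_apply, curv_apply, G.g_sub_left, G.g_sub_left, G.g_sub_left, G.g_sub_left]
  linarith [G.g_symm x (G.conn X (G.conn Y W) x) (Z x),
    G.g_symm x (G.conn Y (G.conn X W) x) (Z x),
    G.g_symm x (G.conn (G.bracket X Y) W x) (Z x), G.g_symm x (G.conn Y Z x) (G.conn X W x),
    G.g_symm x (G.conn X Z x) (G.conn Y W x)]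

lemma dDeriv_bracket_bracket {f : M → ℝ} {X Y Z : M → Euc n} (hf : SmoothFn (n := n) f)
    (hX : SmoothVF (n := n) X) (hY : SmoothVF (n := n) Y) (hZ : SmoothVF (n := n) Z) (x : M) :
    dDeriv (n := n) f (G.bracket X (G.bracket Y Z)) x
      = dDeriv (n := n) (dDeriv (n := n) (dDeriv (n := n) f Z) Y) X x
        - dDeriv (n := n) (dDeriv (n := n) (dDeriv (n := n) f Y) Z) X x
        - dDeriv (n := n) (dDeriv (n := n) (dDeriv (n := n) f X) Z) Y x
        + dDeriv (n := n) (dDeriv (n := n) (dDeriv (n := n) f X) Y) Z x := by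
  have hYZ : dDeriv (n := n) f (G.bracket Y Z) = fun p =>
      dDeriv (n := n) (dDeriv (n := n) f Z) Y p - dDeriv (n := n) (dDeriv (n := n) f Y) Z p :=
    funext (G.dDeriv_bracket hf hY hZ)
  rw [G.dDeriv_bracket hf hX (G.smoothVF_bracket hY hZ), hYZ,
    dDeriv_sub ((G.smoothFn_dDeriv (G.smoothFn_dDeriv hf hZ) hY).mdifferentiableAt x)
      ((G.smoothFn_dDeriv (G.smoothFn_dDeriv hf hY) hZ).mdifferentiableAt x),
    G.dDeriv_bracket (G.smoothFn_dDeriv hf hX) hY hZ]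
  ring

lemma bracket_jacobi [T2Space M] [IsManifold (𝓡 n) (⊤ : ℕ∞) M] [CompactSpace M]
    {X Y Z : M → Euc n} (hX : SmoothVF (n := n) X) (hY : SmoothVF (n := n) Y)
    (hZ : SmoothVF (n := n) Z) (x : M) :
    G.bracket X (G.bracket Y Z) x + G.bracket Y (G.bracket Z X) x
      + G.bracket Z (G.bracket X Y) x = 0 := by
  refine eq_zero_of_forall_mfderiv_eq_zero (I := 𝓡 n) (x := x) fun f hf => ?_
  erw [map_add, map_add]
  change dDeriv (n := n) f (G.bracket X (G.bracket Y Z)) x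
    + dDeriv (n := n) f (G.bracket Y (G.bracket Z X)) x
    + dDeriv (n := n) f (G.bracket Z (G.bracket X Y)) x = 0
  rw [G.dDeriv_bracket_bracket hf hX hY hZ, G.dDeriv_bracket_bracket hf hY hZ hX,
    G.dDeriv_bracket_bracket hf hZ hX hY]
  ring

lemma curv_cyclic [T2Space M] [IsManifold (𝓡 n) (⊤ : ℕ∞) M] [CompactSpace M]
    {X Y Z : M → Euc n} (hX : SmoothVF (n := n) X) (hY : SmoothVF (n := n) Y)
    (hZ : SmoothVF (n := n) Z) (x : M) :
    G.curv X Y Z x + G.curv Y Z X x + G.curv Z X Y x = 0 := by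
  have hexpand : ∀ {P Q R : M → Euc n}, SmoothVF (n := n) Q → SmoothVF (n := n) R →
      G.bracket P (G.bracket Q R) x
        = G.conn P (G.conn Q R) x - G.conn P (G.conn R Q) x - G.conn (G.bracket Q R) P x :=
    fun hQ hR => congrArg (· - _) (G.conn_sub_snd _ (G.conn_smooth _ _ hQ hR)
      (G.conn_smooth _ _ hR hQ) x)
  rw [← G.bracket_jacobi hX hY hZ x, hexpand hY hZ, hexpand hZ hX, hexpand hX hY,
    curv_apply, curv_apply, curv_apply]
  abel

lemma ric_apply_eq_sum_curv {x : M} {b : Fin n → Euc n} (hb : G.IsOrthonormalAt x b)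
    {X Y : M → Euc n} (hX : SmoothVF (n := n) X) (hY : SmoothVF (n := n) Y) :
    G.ric x (X x) (Y x) = ∑ i, G.g x (G.curv (fun _ => b i) X Y x) (b i) :=
  G.ric_spec x b hb X Y hX hY

lemma ric_eq_sum_curv {x : M} {b : Fin n → Euc n} (hb : G.IsOrthonormalAt x b) (u v : Euc n) :
    G.ric x u v = ∑ i, G.g x (G.curv (fun _ => b i) (fun _ => u) (fun _ => v) x) (b i) :=
  G.ric_apply_eq_sum_curv hb contMDiff_const contMDiff_const

lemma ric_smul_right (x : M) (u v : Euc n) (c : ℝ) : G.ric x u (c • v) = c * G.ric x u v := by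
  obtain ⟨b, hb⟩ := G.onb_exists x
  rw [G.ric_eq_sum_curv hb, G.ric_eq_sum_curv hb, Finset.mul_sum]
  refine Finset.sum_congr rfl fun i _ => ?_
  rw [G.curv_const_smul contMDiff_const contMDiff_const contMDiff_const c x, G.g_smul_left]

lemma ric_comm [T2Space M] [IsManifold (𝓡 n) (⊤ : ℕ∞) M] [CompactSpace M] (x : M)
    (u v : Euc n) : G.ric x u v = G.ric x v u := by
  obtain ⟨b, hb⟩ := G.onb_exists x
  rw [G.ric_eq_sum_curv hb, G.ric_eq_sum_curv hb]
  refine Finset.sum_congr rfl fun i _ => ?_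
  have hE : SmoothVF (n := n) (fun _ : M => b i) := contMDiff_const
  have hU : SmoothVF (n := n) (fun _ : M => u) := contMDiff_const
  have hV : SmoothVF (n := n) (fun _ : M => v) := contMDiff_const
  have hbianchi := congrArg (G.g x · (b i)) (G.curv_cyclic hE hU hV x)
  have hskew := G.g_curv_swap hU hV hE hE x
  simp only [G.g_add_left, G.curv_swap (fun _ => b i) (fun _ => v) (fun _ => u) x, G.g_neg_left,
    G.g_zero_left] at hbianchi
  linarith

def IsClosedConformal (ψ : M → ℝ) (A : M → Euc n) : Prop :=
  ∀ (X : M → Euc n) (x : M), G.conn X A x = ψ x • X x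

variable {G} {ψ : M → ℝ} {A : M → Euc n}

lemma IsClosedConformal.curv (hcc : G.IsClosedConformal ψ A) (hψ : SmoothFn (n := n) ψ)
    {X Y : M → Euc n} (hX : SmoothVF (n := n) X) (hY : SmoothVF (n := n) Y) (x : M) :
    G.curv X Y A x = dDeriv (n := n) ψ X x • Y x - dDeriv (n := n) ψ Y x • X x := by
  rw [curv_apply, show G.conn Y A = fun p => ψ p • Y p from funext (hcc Y),
    show G.conn X A = fun p => ψ p • X p from funext (hcc X), G.conn_leibniz ψ X Y hψ hY,
    G.conn_leibniz ψ Y X hψ hX, hcc, bracket, smul_sub]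
  abel

lemma IsClosedConformal.ric (hcc : G.IsClosedConformal ψ A) (hψ : SmoothFn (n := n) ψ)
    (hA : SmoothVF (n := n) A) {X : M → Euc n} (hX : SmoothVF (n := n) X) (x : M) :
    G.ric x (X x) (A x) = dDeriv (n := n) (fun p => (1 - n : ℝ) * ψ p) X x := by
  obtain ⟨b, hb⟩ := G.onb_exists x
  have hterm : ∀ i, G.g x (G.curv (fun _ => b i) X A x) (b i)
      = G.g x (X x) (b i) * dDeriv (n := n) ψ (fun _ => b i) x - dDeriv (n := n) ψ X x := by
    intro i
    rw [hcc.curv hψ contMDiff_const hX, G.g_sub_left, G.g_smul_left, G.g_smul_left, hb,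
      if_pos rfl, G.g_symm]
    ring
  have hexpand : ∑ i, G.g x (X x) (b i) * dDeriv (n := n) ψ (fun _ => b i) x
      = dDeriv (n := n) ψ X x := by
    conv_rhs => rw [dDeriv, ← G.sum_g_smul_of_orthonormal hb (X x)]
    erw [map_sum]
    exact Finset.sum_congr rfl fun i _ => ((mfderiv (𝓡 n) 𝓘(ℝ) ψ x).map_smul _ _).symm
  rw [G.ric_apply_eq_sum_curv hb hX hA, Finset.sum_congr rfl fun i _ => hterm i,
    Finset.sum_sub_distrib, hexpand, dDeriv_const_mul (hψ.mdifferentiableAt x), Finset.sum_const,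
    Finset.card_univ, Fintype.card_fin, nsmul_eq_mul]
  ring

lemma IsClosedConformal.cov2_ricT (hcc : G.IsClosedConformal ψ A) (hψ : SmoothFn (n := n) ψ)
    (hA : SmoothVF (n := n) A) {X Y : M → Euc n} (hX : SmoothVF (n := n) X)
    (hY : SmoothVF (n := n) Y) (x : M) :
    G.cov2 G.ricT X Y A x
      = G.hess (fun p => (1 - n : ℝ) * ψ p) X Y x - ψ x * G.ric x (Y x) (X x) := by
  have hY' : (fun p => G.ric p (Y p) (A p)) = dDeriv (n := n) (fun p => (1 - n : ℝ) * ψ p) Y :=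
    funext (hcc.ric hψ hA hY)
  simp only [cov2, ricT, hess]
  rw [hY', hcc.ric hψ hA (G.conn_smooth X Y hX hY), hcc X x, G.ric_smul_right]

end RiemannStructure

theorem stmt5_general {n : ℕ} {M : Type} [TopologicalSpace M] [T2Space M]
    [ChartedSpace (Euc n) M] [IsManifold (𝓡 n) (⊤ : ℕ∞) M]
    [CompactSpace M] (G : RiemannStructure n M)
    (ψ : M → ℝ) (hψs : SmoothFn (n := n) ψ)
    (A : M → Euc n) (hAs : SmoothVF (n := n) A)
    -- `∇α = ψ g`, with `α` identified with its dual vector field `A`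
    (hcc : ∀ (X : M → Euc n) (x : M), G.conn X A x = ψ x • X x) :
    ∀ X Y : M → Euc n, SmoothVF (n := n) X → SmoothVF (n := n) Y → ∀ x : M,
      G.dnabla G.ricT X Y A x = 0 := by
  intro X Y hX hY x
  have hφ : SmoothFn (n := n) (fun p => (1 - n : ℝ) * ψ p) := contMDiff_const.mul hψs
  have hconf : G.IsClosedConformal ψ A := hcc
  rw [RiemannStructure.dnabla, hconf.cov2_ricT hψs hAs hX hY, hconf.cov2_ricT hψs hAs hY hX,
    G.hess_comm hφ hX hY, G.ric_comm x (X x)]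
  ring

/-- `d^∇ Ric (X, Y, α) = 0` for a closed conformal Killing non-isometric
one-form `α` (identified with its dual vector field `A`), `∇α = ψ g`, `ψ ≢ 0`. -/
theorem stmt5 {n : ℕ} (hn : 2 ≤ n) {M : Type} [TopologicalSpace M] [T2Space M]
    [ChartedSpace (Euc n) M] [IsManifold (𝓡 n) (⊤ : ℕ∞) M]
    [CompactSpace M] [ConnectedSpace M] (G : RiemannStructure n M)
    (ψ : M → ℝ) (hψs : SmoothFn (n := n) ψ) (hψ : ψ ≠ 0)
    (A : M → Euc n) (hAs : SmoothVF (n := n) A)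
    -- `∇α = ψ g`, with `α` identified with its dual vector field `A`
    (hcc : ∀ (X : M → Euc n) (x : M), G.conn X A x = ψ x • X x) :
    ∀ X Y : M → Euc n, SmoothVF (n := n) X → SmoothVF (n := n) Y → ∀ x : M,
      G.dnabla G.ricT X Y A x = 0 :=
  stmt5_general G ψ hψs A hAs hcc

end
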